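/- Transport integration-by-parts identity (identity (transport_identity) in the proof of Theorem 2.4): Let β̄ ∈ C¹(Ω̄; ℝ^d) with β̄·n = 0 on ∂Ω and u ∈ C²(Ω̄) with u = 0 on ∂Ω. Then −∫_Ω (β̄·∇u) Δu dx = ∫_Ω (∇_S β̄ ∇u)·∇u dx − ½ ∫_Ω (∇·β̄) |∇u|² dx, where ∇_S β̄ := ½(Dβ̄ + Dβ̄ᵀ) is the symmetric part of the Jacobian matrix Dβ̄ of β̄. -/

import Mathlib

/-!
Write `G = ∇u`. The boundary is seen only through the divergence theorem, so instead of the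
classical fact that `G` is normal to `∂Ω`, the condition `u = 0` on `∂Ω` enters through
`∫ ∂_q a ∂_p u = ∫ ∂_p a ∂_q u` for every `a ∈ C¹`: for `a ∈ C²` this is the divergence theorem
for `u V`, where `V = ∂_q a e_p - ∂_p a e_q` is divergence free by the symmetry of `D²a`, and a
general `a` is reached by a cutoff followed by mollification and dominated convergence. Taking
`a = G_p β̄_q` and summing over `p, q` gives `∫ (DG β̄)·G + |G|² ∇·β̄ = ∫ (Dβ̄ G)·G + (β̄·G) Δu`.
Since `β̄·n = 0`, the field `|G|² β̄` has no flux, so `2 ∫ (DG β̄)·G = -∫ |G|² ∇·β̄`; eliminating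
`∫ (DG β̄)·G` leaves the claim, because `(∇_S β̄ G)·G = (Dβ̄ G)·G`.
-/

open MeasureTheory Set
open scoped RealInnerProductSpace NNReal

noncomputable section

abbrev Euc (d : ℕ) := EuclideanSpace ℝ (Fin d)

/-- Divergence of a vector field. -/
noncomputable def divg {d : ℕ} (F : Euc d → Euc d) (x : Euc d) : ℝ :=
  ∑ i, fderiv ℝ (fun y => F y i) x (EuclideanSpace.single i 1)

/-- Laplacian of a scalar field. -/
noncomputable def lapl {d : ℕ} (g : Euc d → ℝ) (x : Euc d) : ℝ :=
  ∑ i, fderiv ℝ (fun y => fderiv ℝ g y (EuclideanSpace.single i 1)) x (EuclideanSpace.single i 1)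

/-- Action of the symmetric part ∇_S β̄ = ½(Dβ̄ + Dβ̄ᵀ) of the Jacobian of `βb` at `x` on `v`. -/
noncomputable def symGradApp {d : ℕ} (βb : Euc d → Euc d) (x v : Euc d) : Euc d :=
  (1 / 2 : ℝ) • (fderiv ℝ βb x v + ContinuousLinearMap.adjoint (fderiv ℝ βb x) v)

open Filter Topology
open scoped ContDiff Convolution

section Approximation

variable {E : Type*} [NormedAddCommGroup E] [NormedSpace ℝ E] [FiniteDimensional ℝ E]

theorem ContDiff.exists_hasCompactSupport_fderiv_eqOn {a : E → ℝ} (ha : ContDiff ℝ 1 a)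
    {s : Set E} (hs : Bornology.IsBounded s) :
    ∃ a' : E → ℝ, ContDiff ℝ 1 a' ∧ HasCompactSupport a' ∧
      ∀ x ∈ s, fderiv ℝ a' x = fderiv ℝ a x := by
  obtain ⟨R, hR, hsR⟩ := hs.subset_ball_lt 0 0
  let χ : ContDiffBump (0 : E) := ⟨R, R + 1, hR, by linarith⟩
  refine ⟨fun x => χ x * a x, χ.contDiff.mul ha, χ.hasCompactSupport.mul_right, fun x hx => ?_⟩
  refine Filter.EventuallyEq.fderiv_eq ?_
  filter_upwards [Metric.isOpen_ball.mem_nhds (hsR hx)] with y hy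
  rw [χ.one_of_mem_closedBall (Metric.ball_subset_closedBall hy), one_mul]

theorem HasCompactSupport.exists_contDiff_tendsto_fderiv {a : E → ℝ} (ha : ContDiff ℝ 1 a)
    (hsupp : HasCompactSupport a) :
    ∃ b : ℕ → E → ℝ, (∀ k, ContDiff ℝ ∞ (b k)) ∧
      (∀ x v, Tendsto (fun k => fderiv ℝ (b k) x v) atTop (𝓝 (fderiv ℝ a x v))) ∧
      ∀ v, ∃ C, ∀ k x, |fderiv ℝ (b k) x v| ≤ C := by
  borelize E
  let μ : Measure E := .addHaar
  let ρ : ℕ → ContDiffBump (0 : E) := fun k =>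
    ⟨((k : ℝ) + 1)⁻¹ / 2, ((k : ℝ) + 1)⁻¹, by positivity, half_lt_self (by positivity)⟩
  have hρ : Tendsto (fun k => (ρ k).rOut) atTop (𝓝 0) :=
    tendsto_inv_atTop_nhds_zero_nat.comp (tendsto_add_atTop_nat 1) |>.congr (by simp [ρ])
  have hDa : ∀ v, Continuous fun x => fderiv ℝ a x v := fun v =>
    (ha.continuous_fderiv one_ne_zero).clm_apply continuous_const
  have hDconv : ∀ k x v,
      fderiv ℝ ((ρ k).normed μ ⋆[ContinuousLinearMap.lsmul ℝ ℝ, μ] a) x v =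
        ((ρ k).normed μ ⋆[ContinuousLinearMap.lsmul ℝ ℝ, μ] fun y => fderiv ℝ a y v) x := by
    intro k x v
    have hloc := (ρ k).integrable_normed.locallyIntegrable (μ := μ)
    rw [(hsupp.hasFDerivAt_convolution_right _ hloc ha x).fderiv]
    exact convolution_precompR_apply (𝕜 := ℝ) _ hloc (hsupp.fderiv (𝕜 := ℝ))
      (ha.continuous_fderiv one_ne_zero) x v
  refine ⟨fun k => (ρ k).normed μ ⋆[ContinuousLinearMap.lsmul ℝ ℝ, μ] a, fun k => ?_,
    fun x v => ?_, fun v => ?_⟩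
  · exact (ρ k).hasCompactSupport_normed.contDiff_convolution_left _ (ρ k).contDiff_normed
      ha.continuous.locallyIntegrable
  · simp only [hDconv]
    exact ContDiffBump.convolution_tendsto_right_of_continuous hρ (hDa v) x
  · obtain ⟨C, hC⟩ := (hDa v).bounded_above_of_compact_support
      (hsupp.fderiv (𝕜 := ℝ) |>.comp_left (g := fun T : E →L[ℝ] ℝ => T v) rfl)
    refine ⟨C, fun k x => ?_⟩
    rw [hDconv, ← Real.norm_eq_abs, ← dist_zero_right]
    exact dist_convolution_le ((norm_nonneg _).trans (hC x)) (ρ k).support_normed_eq.subset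
      (ρ k).nonneg_normed (ρ k).integral_normed (hDa v).aestronglyMeasurable
      fun y _ => by simpa using hC y

end Approximation

theorem Continuous.integrableOn_of_isBounded {α E : Type*} [MetricSpace α] [ProperSpace α]
    [MeasurableSpace α] [OpensMeasurableSpace α] {μ : Measure α} [IsFiniteMeasureOnCompacts μ]
    [NormedAddCommGroup E] {f : α → E} (hf : Continuous f) {s : Set α}
    (hs : Bornology.IsBounded s) : IntegrableOn f s μ :=
  (hf.continuousOn.integrableOn_compact hs.isCompact_closure).mono_set subset_closure

theorem Bornology.IsBounded.tendsto_setIntegral_of_dominated {α E : Type*} [MetricSpace α]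
    [ProperSpace α] [MeasurableSpace α] [OpensMeasurableSpace α] {μ : Measure α}
    [IsFiniteMeasureOnCompacts μ] [NormedAddCommGroup E] [NormedSpace ℝ E] {s : Set α}
    (hs : Bornology.IsBounded s) {F : ℕ → α → E} {f : α → E} {C : ℝ}
    (hF : ∀ k, Continuous (F k)) (hFC : ∀ k, ∀ x ∈ closure s, ‖F k x‖ ≤ C)
    (hlim : ∀ x ∈ closure s, Tendsto (fun k => F k x) atTop (𝓝 (f x))) :
    Tendsto (fun k => ∫ x in s, F k x ∂μ) atTop (𝓝 (∫ x in s, f x ∂μ)) := by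
  have hs_closure : ∀ᵐ x ∂μ.restrict s, x ∈ closure s :=
    ae_restrict_of_ae_restrict_of_subset subset_closure
      (ae_restrict_mem isClosed_closure.measurableSet)
  refine tendsto_integral_of_dominated_convergence (fun _ => C)
    (fun k => (hF k).aestronglyMeasurable) (integrableOn_const hs.measure_lt_top.ne)
    (fun k => ?_) ?_
  · filter_upwards [hs_closure] with x hx using hFC k x hx
  · filter_upwards [hs_closure] with x hx using hlim x hx

theorem ContDiff.gradient {F : Type*} [NormedAddCommGroup F] [InnerProductSpace ℝ F]
    [CompleteSpace F] {u : F → ℝ} {m n : WithTop ℕ∞} (hu : ContDiff ℝ n u) (hmn : m + 1 ≤ n) :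
    ContDiff ℝ m (gradient u) :=
  (InnerProductSpace.toDual ℝ F).symm.contDiff.comp (hu.fderiv_right hmn)

section Divergence

variable {d : ℕ}

theorem ContinuousLinearMap.map_eq_sum_single {X : Type*} [AddCommGroup X] [Module ℝ X]
    [TopologicalSpace X] (T : Euc d →L[ℝ] X) (v : Euc d) :
    T v = ∑ i, v i • T (EuclideanSpace.single i 1) := by
  conv_lhs => rw [← (EuclideanSpace.basisFun (Fin d) ℝ).sum_repr v]
  simp

theorem fderiv_apply_coord {F : Euc d → Euc d} {x : Euc d} (hF : DifferentiableAt ℝ F x)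
    (i : Fin d) (v : Euc d) : fderiv ℝ (fun y => F y i) x v = fderiv ℝ F x v i :=
  congrArg (· v) ((PiLp.hasFDerivAt_apply 2 (F x) i).comp x hF.hasFDerivAt).fderiv

theorem gradient_apply_eq_fderiv (u : Euc d → ℝ) (x : Euc d) (i : Fin d) :
    gradient u x i = fderiv ℝ u x (EuclideanSpace.single i 1) := by
  have h := InnerProductSpace.toDual_symm_apply (𝕜 := ℝ) (x := EuclideanSpace.single i 1)
    (y := fderiv ℝ u x)
  rw [EuclideanSpace.inner_single_right] at h
  simpa [gradient] using h

theorem lapl_eq_divg_gradient (u : Euc d → ℝ) : lapl u = divg (gradient u) := by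
  ext x
  simp only [lapl, divg, gradient_apply_eq_fderiv]

theorem ContDiff.continuous_divg {F : Euc d → Euc d} (hF : ContDiff ℝ 1 F) :
    Continuous (divg F) :=
  continuous_finsetSum _ fun i _ =>
    (((contDiff_piLp 2).1 hF i).continuous_fderiv one_ne_zero).clm_apply continuous_const

theorem divg_smul {h : Euc d → ℝ} {V : Euc d → Euc d} {x : Euc d}
    (hh : DifferentiableAt ℝ h x) (hV : DifferentiableAt ℝ V x) :
    divg (fun y => h y • V y) x = fderiv ℝ h x (V x) + h x * divg V x := by
  have hVi : ∀ i, DifferentiableAt ℝ (fun y => V y i) x := (differentiableAt_piLp 2).1 hV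
  simp only [divg, PiLp.smul_apply, smul_eq_mul]
  simp only [fderiv_fun_mul hh (hVi _), add_apply, smul_apply, smul_eq_mul,
    Finset.sum_add_distrib, Finset.mul_sum]
  rw [(fderiv ℝ h x).map_eq_sum_single (V x)]
  simp only [smul_eq_mul, add_comm]

theorem divg_sub {V W : Euc d → Euc d} {x : Euc d}
    (hV : DifferentiableAt ℝ V x) (hW : DifferentiableAt ℝ W x) :
    divg (fun y => V y - W y) x = divg V x - divg W x := by
  simp only [divg, PiLp.sub_apply, ← Finset.sum_sub_distrib]
  refine Finset.sum_congr rfl fun i _ => ?_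
  rw [fderiv_fun_sub ((differentiableAt_piLp 2).1 hV i) ((differentiableAt_piLp 2).1 hW i)]
  rfl

theorem divg_smul_const {h : Euc d → ℝ} {x : Euc d} (hh : DifferentiableAt ℝ h x)
    (v : Euc d) : divg (fun y => h y • v) x = fderiv ℝ h x v := by
  rw [divg_smul hh (differentiableAt_const v)]
  simp [divg]

theorem divg_fderiv_smul_sub_fderiv_smul {b : Euc d → ℝ} (hb : ContDiff ℝ 2 b)
    (v w x : Euc d) : divg (fun y => fderiv ℝ b y w • v - fderiv ℝ b y v • w) x = 0 := by
  have hDb : ContDiff ℝ 1 (fderiv ℝ b) := hb.fderiv_right (by norm_num)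
  have hDb_apply : ∀ z, Differentiable ℝ fun y => fderiv ℝ b y z := fun z =>
    (hDb.differentiable one_ne_zero).clm_apply (differentiable_const z)
  have hD2 : ∀ z z', fderiv ℝ (fun y => fderiv ℝ b y z) x z' = fderiv ℝ (fderiv ℝ b) x z' z :=
    fun z z' => by
      rw [fderiv_clm_apply (hDb.differentiable one_ne_zero x) (differentiableAt_const z)]
      simp
  rw [divg_sub ((hDb_apply w x).smul_const v) ((hDb_apply v x).smul_const w),
    divg_smul_const (hDb_apply w x), divg_smul_const (hDb_apply v x), hD2, hD2,
    hb.contDiffAt.isSymmSndFDerivAt (by simp) v w, sub_self]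

theorem sum_mul_divg_smul (z : Euc d) {W U : Euc d → Euc d} {x : Euc d}
    (hW : DifferentiableAt ℝ W x) (hU : DifferentiableAt ℝ U x) :
    ∑ p, z p * divg (fun y => W y p • U y) x =
      ⟪fderiv ℝ W x (U x), z⟫ + ⟪W x, z⟫ * divg U x := by
  simp only [divg_smul ((differentiableAt_piLp 2).1 hW _) hU, fderiv_apply_coord hW, mul_add,
    Finset.sum_add_distrib, PiLp.inner_apply, RCLike.inner_apply, conj_trivial, Finset.sum_mul]
  congr 1
  exact Finset.sum_congr rfl fun p _ => by ring

theorem inner_symGradApp_self (βb : Euc d → Euc d) (x v : Euc d) :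
    ⟪symGradApp βb x v, v⟫ = ⟪fderiv ℝ βb x v, v⟫ := by
  rw [symGradApp, real_inner_smul_left, inner_add_left, ContinuousLinearMap.adjoint_inner_left,
    real_inner_comm v]
  ring

def HasDivergenceTheorem (Ω : Set (Euc d)) (n : Euc d → Euc d) (σ : Measure (Euc d)) : Prop :=
  ∀ F : Euc d → Euc d, ContDiff ℝ 1 F →
    (∫ x in Ω, divg F x) = ∫ x in frontier Ω, ⟪F x, n x⟫ ∂σ

namespace HasDivergenceTheorem

variable {Ω : Set (Euc d)} {n : Euc d → Euc d} {σ : Measure (Euc d)}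

theorem integral_divg_eq_zero (h : HasDivergenceTheorem Ω n σ) {F : Euc d → Euc d}
    (hF : ContDiff ℝ 1 F) (hFn : ∀ x ∈ frontier Ω, ⟪F x, n x⟫ = 0) :
    ∫ x in Ω, divg F x = 0 := by
  rw [h F hF, setIntegral_congr_fun isClosed_frontier.measurableSet hFn, integral_zero]

theorem integral_fderiv_mul_sub_eq_zero_of_contDiff_two (h : HasDivergenceTheorem Ω n σ)
    {u : Euc d → ℝ} (hu : ContDiff ℝ 1 u) (hubc : ∀ x ∈ frontier Ω, u x = 0)
    {b : Euc d → ℝ} (hb : ContDiff ℝ 2 b) (v w : Euc d) :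
    ∫ x in Ω, (fderiv ℝ b x w * fderiv ℝ u x v - fderiv ℝ b x v * fderiv ℝ u x w) = 0 := by
  set V : Euc d → Euc d := fun y => fderiv ℝ b y w • v - fderiv ℝ b y v • w
  have hDb : ContDiff ℝ 1 (fderiv ℝ b) := hb.fderiv_right (by norm_num)
  have hV : ContDiff ℝ 1 V := ((hDb.clm_apply contDiff_const).smul contDiff_const).sub
    ((hDb.clm_apply contDiff_const).smul contDiff_const)
  have hdivg : ∀ x, divg (fun y => u y • V y) x =
      fderiv ℝ b x w * fderiv ℝ u x v - fderiv ℝ b x v * fderiv ℝ u x w := fun x => by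
    rw [divg_smul (hu.differentiable one_ne_zero x) (hV.differentiable one_ne_zero x),
      divg_fderiv_smul_sub_fderiv_smul hb v w x]
    simp only [V, map_sub, map_smul, smul_eq_mul]
    ring
  simp_rw [← hdivg]
  exact h.integral_divg_eq_zero (hu.smul hV) fun x hx => by
    rw [real_inner_smul_left, hubc x hx, zero_mul]

theorem integral_fderiv_mul_sub_eq_zero (h : HasDivergenceTheorem Ω n σ)
    (hΩ : Bornology.IsBounded Ω) {u : Euc d → ℝ} (hu : ContDiff ℝ 1 u)
    (hubc : ∀ x ∈ frontier Ω, u x = 0) {a : Euc d → ℝ} (ha : ContDiff ℝ 1 a) (v w : Euc d) :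
    ∫ x in Ω, (fderiv ℝ a x w * fderiv ℝ u x v - fderiv ℝ a x v * fderiv ℝ u x w) = 0 := by
  obtain ⟨a', ha', ha'_supp, ha'_eq⟩ := ha.exists_hasCompactSupport_fderiv_eqOn hΩ.closure
  obtain ⟨b, hb, hb_lim, hb_bound⟩ := ha'_supp.exists_contDiff_tendsto_fderiv ha'
  obtain ⟨Cv, hCv⟩ := hb_bound v
  obtain ⟨Cw, hCw⟩ := hb_bound w
  have hDu : ∀ z, Continuous fun x => fderiv ℝ u x z := fun z =>
    (hu.continuous_fderiv one_ne_zero).clm_apply continuous_const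
  have hDb : ∀ k z, Continuous fun x => fderiv ℝ (b k) x z := fun k z =>
    ((hb k).continuous_fderiv (by simp)).clm_apply continuous_const
  obtain ⟨Bv, hBv⟩ := hΩ.isCompact_closure.exists_bound_of_continuousOn (hDu v).continuousOn
  obtain ⟨Bw, hBw⟩ := hΩ.isCompact_closure.exists_bound_of_continuousOn (hDu w).continuousOn
  have hb_zero : ∀ k, ∫ x in Ω, (fderiv ℝ (b k) x w * fderiv ℝ u x v
      - fderiv ℝ (b k) x v * fderiv ℝ u x w) = 0 := fun k =>
    h.integral_fderiv_mul_sub_eq_zero_of_contDiff_two hu hubc ((hb k).of_le (by norm_cast)) v w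
  refine tendsto_nhds_unique (hΩ.tendsto_setIntegral_of_dominated (C := Cw * Bv + Cv * Bw)
    (fun k => ((hDb k w).fun_mul (hDu v)).fun_sub ((hDb k v).fun_mul (hDu w))) (fun k x hx => ?_)
    (fun x hx => ?_)) (by simp only [hb_zero]; exact tendsto_const_nhds)
  · have hv := hBv x hx
    have hw := hBw x hx
    rw [Real.norm_eq_abs] at hv hw ⊢
    calc _ ≤ |fderiv ℝ (b k) x w| * |fderiv ℝ u x v|
          + |fderiv ℝ (b k) x v| * |fderiv ℝ u x w| := by
          rw [← abs_mul, ← abs_mul]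
          exact abs_sub _ _
      _ ≤ Cw * Bv + Cv * Bw := by
          gcongr
          · exact (abs_nonneg _).trans (hCw k x)
          · exact hCw k x
          · exact (abs_nonneg _).trans (hCv k x)
          · exact hCv k x
  · rw [← ha'_eq x hx]
    exact ((hb_lim x w).mul tendsto_const_nhds).sub ((hb_lim x v).mul tendsto_const_nhds)

theorem integral_sum_gradient_mul_divg_smul_comm (h : HasDivergenceTheorem Ω n σ)
    (hΩ : Bornology.IsBounded Ω) {u : Euc d → ℝ} (hu : ContDiff ℝ 1 u)
    (hubc : ∀ x ∈ frontier Ω, u x = 0) {X Y : Euc d → Euc d} (hX : ContDiff ℝ 1 X)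
    (hY : ContDiff ℝ 1 Y) :
    ∫ x in Ω, ∑ p, gradient u x p * divg (fun y => X y p • Y y) x =
      ∫ x in Ω, ∑ q, gradient u x q * divg (fun y => Y y q • X y) x := by
  set a : Fin d → Fin d → Euc d → ℝ := fun p q y => X y p * Y y q
  have ha : ∀ p q, ContDiff ℝ 1 (a p q) := fun p q =>
    ((contDiff_piLp 2).1 hX p).mul ((contDiff_piLp 2).1 hY q)
  have hint : ∀ p q i j, IntegrableOn (fun x => fderiv ℝ (a p q) x
      (EuclideanSpace.single i 1) * gradient u x j) Ω := fun p q i j => by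
    simp only [gradient_apply_eq_fderiv]
    exact Continuous.integrableOn_of_isBounded
      ((((ha p q).continuous_fderiv one_ne_zero).clm_apply continuous_const).mul
        ((hu.continuous_fderiv one_ne_zero).clm_apply continuous_const)) hΩ
  have hlhs : ∀ x, ∑ p, gradient u x p * divg (fun y => X y p • Y y) x =
      ∑ p, ∑ q, fderiv ℝ (a p q) x (EuclideanSpace.single q 1) * gradient u x p := fun x => by
    simp only [divg, PiLp.smul_apply, smul_eq_mul, Finset.sum_mul, a, mul_comm (gradient u x _)]
  have hrhs : ∀ x, ∑ q, gradient u x q * divg (fun y => Y y q • X y) x =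
      ∑ p, ∑ q, fderiv ℝ (a p q) x (EuclideanSpace.single p 1) * gradient u x q := fun x => by
    rw [Finset.sum_comm]
    simp only [divg, PiLp.smul_apply, smul_eq_mul, Finset.sum_mul, a, mul_comm (gradient u x _),
      mul_comm (Y _ _)]
  simp only [hlhs, hrhs]
  rw [integral_finsetSum _ fun p _ => integrable_finsetSum _ fun q _ => hint p q q p,
    integral_finsetSum _ fun p _ => integrable_finsetSum _ fun q _ => hint p q p q]
  refine Finset.sum_congr rfl fun p _ => ?_
  rw [integral_finsetSum _ fun q _ => hint p q q p, integral_finsetSum _ fun q _ => hint p q p q]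
  refine Finset.sum_congr rfl fun q _ => ?_
  rw [← sub_eq_zero, ← integral_sub (hint p q q p) (hint p q p q)]
  simp only [gradient_apply_eq_fderiv]
  exact h.integral_fderiv_mul_sub_eq_zero hΩ hu hubc (ha p q) _ _

theorem integral_inner_fderiv_add_integral_inner_mul_divg_comm (h : HasDivergenceTheorem Ω n σ)
    (hΩ : Bornology.IsBounded Ω) {u : Euc d → ℝ} (hu : ContDiff ℝ 1 u)
    (hubc : ∀ x ∈ frontier Ω, u x = 0) {X Y : Euc d → Euc d} (hX : ContDiff ℝ 1 X)
    (hY : ContDiff ℝ 1 Y) :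
    (∫ x in Ω, ⟪fderiv ℝ X x (Y x), gradient u x⟫) + ∫ x in Ω, ⟪X x, gradient u x⟫ * divg Y x =
      (∫ x in Ω, ⟪fderiv ℝ Y x (X x), gradient u x⟫) +
        ∫ x in Ω, ⟪Y x, gradient u x⟫ * divg X x := by
  have hGu : Continuous (gradient u) := (hu.gradient (m := 0) (by simp)).continuous
  have hint₁ : ∀ {V W : Euc d → Euc d}, ContDiff ℝ 1 V → ContDiff ℝ 1 W →
      IntegrableOn (fun x => ⟪fderiv ℝ V x (W x), gradient u x⟫) Ω := fun hV hW =>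
    (((hV.continuous_fderiv one_ne_zero).clm_apply hW.continuous).inner
      hGu).integrableOn_of_isBounded hΩ
  have hint₂ : ∀ {V W : Euc d → Euc d}, ContDiff ℝ 1 V → ContDiff ℝ 1 W →
      IntegrableOn (fun x => ⟪V x, gradient u x⟫ * divg W x) Ω := fun hV hW =>
    ((hV.continuous.inner hGu).mul hW.continuous_divg).integrableOn_of_isBounded hΩ
  rw [← integral_add (hint₁ hX hY) (hint₂ hX hY), ← integral_add (hint₁ hY hX) (hint₂ hY hX)]
  simp only [← sum_mul_divg_smul (gradient u _) (hX.differentiable one_ne_zero _)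
    (hY.differentiable one_ne_zero _), ← sum_mul_divg_smul (gradient u _)
    (hY.differentiable one_ne_zero _) (hX.differentiable one_ne_zero _)]
  exact h.integral_sum_gradient_mul_divg_smul_comm hΩ hu hubc hX hY

theorem two_mul_integral_inner_fderiv_add_integral_norm_sq_mul_divg
    (h : HasDivergenceTheorem Ω n σ) (hΩ : Bornology.IsBounded Ω) {X Y : Euc d → Euc d}
    (hX : ContDiff ℝ 1 X) (hY : ContDiff ℝ 1 Y) (hYn : ∀ x ∈ frontier Ω, ⟪Y x, n x⟫ = 0) :
    2 * (∫ x in Ω, ⟪fderiv ℝ X x (Y x), X x⟫) + ∫ x in Ω, ‖X x‖ ^ 2 * divg Y x = 0 := by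
  have hX2 : ContDiff ℝ 1 fun x => ‖X x‖ ^ 2 := hX.norm_sq ℝ
  rw [← integral_const_mul, ← integral_add
    ((continuous_const.fun_mul (((hX.continuous_fderiv one_ne_zero).clm_apply
      hY.continuous).inner hX.continuous)).integrableOn_of_isBounded hΩ)
    ((hX2.continuous.fun_mul hY.continuous_divg).integrableOn_of_isBounded hΩ)]
  rw [← h.integral_divg_eq_zero (hX2.fun_smul hY) fun x hx => by
    rw [real_inner_smul_left, hYn x hx, mul_zero]]
  refine integral_congr_ae (ae_of_all _ fun x => ?_)
  rw [divg_smul (hX2.differentiable one_ne_zero x) (hY.differentiable one_ne_zero x),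
    ((hX.differentiable one_ne_zero x).hasFDerivAt.norm_sq).fderiv]
  simp [real_inner_comm]

end HasDivergenceTheorem

end Divergence

theorem transport_integration_by_parts_identity_general
    (d : ℕ) (Ω : Set (Euc d))
    (hΩb : Bornology.IsBounded Ω)
    (n : Euc d → Euc d)
    (σ : Measure (Euc d))
    -- the divergence theorem holds on Ω
    (hdivthm : ∀ F : Euc d → Euc d, ContDiff ℝ 1 F →
      (∫ x in Ω, divg F x) = ∫ x in frontier Ω, ⟪F x, n x⟫ ∂σ)
    (βb : Euc d → Euc d) (hβb : ContDiff ℝ 1 βb)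
    (hβbn : ∀ x ∈ frontier Ω, ⟪βb x, n x⟫ = 0)
    (u : Euc d → ℝ) (hu : ContDiff ℝ 2 u)
    (hubc : ∀ x ∈ frontier Ω, u x = 0) :
    -(∫ x in Ω, ⟪βb x, gradient u x⟫ * lapl u x) =
      (∫ x in Ω, ⟪symGradApp βb x (gradient u x), gradient u x⟫) -
        (1 / 2 : ℝ) * ∫ x in Ω, divg βb x * ‖gradient u x‖ ^ 2 := by
  have hG : ContDiff ℝ 1 (gradient u) := hu.gradient (by norm_num)
  have hswap := HasDivergenceTheorem.integral_inner_fderiv_add_integral_inner_mul_divg_comm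
    hdivthm hΩb (hu.of_le one_le_two) hubc hG hβb
  have htangential :=
    HasDivergenceTheorem.two_mul_integral_inner_fderiv_add_integral_norm_sq_mul_divg
      hdivthm hΩb hG hβb hβbn
  simp only [real_inner_self_eq_norm_sq] at hswap
  simp only [lapl_eq_divg_gradient, inner_symGradApp_self, mul_comm (divg βb _)]
  linarith

/-- transport integration-by-parts identity, identity (transport_identity)
in the proof of Theorem 2.4: on a bounded open (Lipschitz) domain Ω ⊂ ℝ^d (d = 2,3) with
outward unit normal `n` and boundary measure `σ` for which the divergence theorem holds,
if β̄ ∈ C¹ with β̄·n = 0 on ∂Ω and u ∈ C² with u = 0 on ∂Ω, then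
−∫_Ω (β̄·∇u) Δu dx = ∫_Ω (∇_S β̄ ∇u)·∇u dx − ½ ∫_Ω (∇·β̄)|∇u|² dx. -/
theorem transport_integration_by_parts_identity
    (d : ℕ) (hd : d = 2 ∨ d = 3) (Ω : Set (Euc d))
    (hΩo : IsOpen Ω) (hΩb : Bornology.IsBounded Ω) (hΩne : Ω.Nonempty)
    (n : Euc d → Euc d) (hn : ∀ x ∈ frontier Ω, ‖n x‖ = 1)
    (σ : Measure (Euc d))
    -- the divergence theorem holds on Ω
    (hdivthm : ∀ F : Euc d → Euc d, ContDiff ℝ 1 F →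
      (∫ x in Ω, divg F x) = ∫ x in frontier Ω, ⟪F x, n x⟫ ∂σ)
    (βb : Euc d → Euc d) (hβb : ContDiff ℝ 1 βb)
    (hβbn : ∀ x ∈ frontier Ω, ⟪βb x, n x⟫ = 0)
    (u : Euc d → ℝ) (hu : ContDiff ℝ 2 u)
    (hubc : ∀ x ∈ frontier Ω, u x = 0) :
    -(∫ x in Ω, ⟪βb x, gradient u x⟫ * lapl u x) =
      (∫ x in Ω, ⟪symGradApp βb x (gradient u x), gradient u x⟫) -
        (1 / 2 : ℝ) * ∫ x in Ω, divg βb x * ‖gradient u x‖ ^ 2 :=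
  transport_integration_by_parts_identity_general d Ω hΩb n σ hdivthm βb hβb hβbn u hu hubc

end
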